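/- In the setting of the abstract convergence theorem, assume additionally the small step-size safeguard (A3): ‖x_{n+1} − x_n‖ ≥ κ g⁻(x_n) for some κ > 0 and all large n. Then g⁻(x_n) → 0, and the convergence rate satisfies ‖x_n − x*‖ ≤ C e^{−cn} for some c, C > 0 if θ = 1/2, and ‖x_n − x*‖ ≤ C n^{−θ/(1−2θ)} if 0 < θ < 1/2. -/

import Mathlib

open scoped RealInnerProductSpace

/-- Sequential tangent cone of `M ⊆ ℝ^N` at `x`. -/
def seqTangentCone {N : ℕ} (M : Set (EuclideanSpace ℝ (Fin N)))
    (x : EuclideanSpace ℝ (Fin N)) : Set (EuclideanSpace ℝ (Fin N)) :=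
  {ξ | ∃ (X : ℕ → EuclideanSpace ℝ (Fin N)) (a : ℕ → ℝ),
      (∀ i, X i ∈ M) ∧ (∀ i, 0 < a i) ∧
      Filter.Tendsto X Filter.atTop (nhds x) ∧
      Filter.Tendsto (fun i => a i • (X i - x)) Filter.atTop (nhds ξ)}

/-- `g⁻(y)`: the norm of the projection of the antigradient `−∇f(y)` onto the tangent
cone of `M` at `y`, characterized as `max{ −∇f(y)ᵀξ : ξ ∈ T_y M, ‖ξ‖ ≤ 1 }`. -/
noncomputable def gNeg {N : ℕ} (f : EuclideanSpace ℝ (Fin N) → ℝ)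
    (M : Set (EuclideanSpace ℝ (Fin N))) (y : EuclideanSpace ℝ (Fin N)) : ℝ :=
  sSup ((fun ξ => ⟪-(gradient f y), ξ⟫) '' {ξ | ξ ∈ seqTangentCone M y ∧ ‖ξ‖ ≤ 1})
/-!
By (A1) the values `f (x n)` decrease, so they converge to `f x*` (continuity at the cluster
point), and (A3) turns the decrease into `σ κ g⁻(x n)² ≤ f (x n) - f (x (n+1))`, whence
`g⁻(x n) → 0`. Put `Δ n = f (x n) - f x*`. Inside the `δ`-ball, concavity of `t ↦ t ^ θ` and the
Łojasiewicz inequality bound each step by `K (Δ n ^ θ - Δ (n+1) ^ θ)` with `K = Λ / (σ θ)`; these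
bounds telescope, so the iterates are trapped in the ball once they come near `x*` with small `Δ`,
and then `‖x n - x*‖ ≤ K Δ n ^ θ`. Łojasiewicz together with (A3) gives
`Δ n - Δ (n+1) ≥ (σ κ / Λ²) Δ n ^ (2 (1 - θ))`: for `θ = 1/2` this is geometric decay, and for
`θ < 1/2` the quantity `Δ n ^ (-(1 - 2θ))` grows at least linearly.
-/

open Filter Topology Real

lemma zero_mem_seqTangentCone {N : ℕ} {M : Set (EuclideanSpace ℝ (Fin N))}
    {y : EuclideanSpace ℝ (Fin N)} (hy : y ∈ M) : 0 ∈ seqTangentCone M y :=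
  ⟨fun _ => y, fun _ => 1, fun _ => hy, fun _ => one_pos, tendsto_const_nhds, by simp⟩

lemma gNeg_nonneg {N : ℕ} (f : EuclideanSpace ℝ (Fin N) → ℝ) {M : Set (EuclideanSpace ℝ (Fin N))}
    {y : EuclideanSpace ℝ (Fin N)} (hy : y ∈ M) : 0 ≤ gNeg f M y := by
  refine le_csSup ⟨‖gradient f y‖, ?_⟩ ⟨0, ⟨zero_mem_seqTangentCone hy, by simp⟩, by simp⟩
  rintro _ ⟨ξ, ⟨-, hξ⟩, rfl⟩
  calc ⟪-gradient f y, ξ⟫ ≤ ‖-gradient f y‖ * ‖ξ‖ := real_inner_le_norm _ _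
    _ ≤ ‖gradient f y‖ := by rw [norm_neg]; exact mul_le_of_le_one_right (norm_nonneg _) hξ

lemma Antitone.tendsto_atTop_of_mapClusterPt {α ι : Type*} [ConditionallyCompleteLinearOrder α]
    [TopologicalSpace α] [OrderTopology α] [SemilatticeSup ι] [Nonempty ι] {u : ι → α} {a : α}
    (hu : Antitone u) (ha : MapClusterPt a atTop u) : Tendsto u atTop (𝓝 a) := by
  have hlb : ∀ n, a ≤ u n := fun n =>
    isClosed_Iic.mem_of_mapClusterPt ha ((eventually_ge_atTop n).mono fun _ hm => hu hm)
  have hinf := tendsto_atTop_ciInf hu ⟨a, Set.forall_mem_range.2 hlb⟩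
  rwa [eq_of_nhds_neBot (ha.clusterPt.mono hinf)]

namespace Real

lemma mul_rpow_sub_one_mul_sub_le_rpow_sub_rpow {a b θ : ℝ} (ha : 0 < a) (hb : 0 ≤ b)
    (hθ0 : 0 ≤ θ) (hθ1 : θ ≤ 1) : θ * a ^ (θ - 1) * (a - b) ≤ a ^ θ - b ^ θ := by
  have hbern := rpow_one_add_le_one_add_mul_self (s := b / a - 1)
    (by linarith [div_nonneg hb ha.le]) hθ0 hθ1
  rw [add_sub_cancel, div_rpow hb ha.le, div_le_iff₀ (rpow_pos_of_pos ha θ)] at hbern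
  have : θ * (a ^ θ / a) * (a - b) = a ^ θ - (1 + θ * (b / a - 1)) * a ^ θ := by
    field_simp; ring
  rw [rpow_sub_one ha.ne', this]
  linarith

lemma mul_rpow_neg_sub_one_mul_sub_le_rpow_neg_sub_rpow_neg {a b γ : ℝ} (ha : 0 < a) (hb : 0 < b)
    (hγ : 0 ≤ γ) : γ * a ^ (-γ - 1) * (a - b) ≤ b ^ (-γ) - a ^ (-γ) := by
  have hu : 0 < b / a := div_pos hb ha
  -- `u ^ (-γ) = exp (-γ log u) ≥ 1 - γ log u ≥ 1 + γ (1 - u)`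
  have key : 1 + γ * (1 - b / a) ≤ (b / a) ^ (-γ) := by
    rw [rpow_def_of_pos hu]
    nlinarith [add_one_le_exp (log (b / a) * -γ), log_le_sub_one_of_pos hu]
  rw [div_rpow hb.le ha.le, le_div_iff₀ (rpow_pos_of_pos ha _)] at key
  have : γ * (a ^ (-γ) / a) * (a - b) = (1 + γ * (1 - b / a)) * a ^ (-γ) - a ^ (-γ) := by
    field_simp; ring
  rw [rpow_sub_one ha.ne', this]
  linarith

end Real

lemma le_div_mul_rpow_sub_rpow_of_lojasiewicz {a b g s σ θ Λ : ℝ} (hσ : 0 < σ) (hθ0 : 0 < θ)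
    (hθ1 : θ ≤ 1) (hb : 0 ≤ b) (hg : 0 ≤ g) (hs : 0 ≤ s) (hdesc : σ * g * s ≤ a - b)
    (hloj : a ^ (1 - θ) ≤ Λ * g) (hstall : g = 0 → s = 0) :
    s ≤ Λ / (σ * θ) * (a ^ θ - b ^ θ) := by
  have hgs : 0 ≤ σ * g * s := by positivity
  rcases (show b ≤ a by linarith).eq_or_lt' with rfl | hba
  · obtain h | h : g = 0 ∨ s = 0 := mul_eq_zero.1 (by nlinarith [mul_nonneg hg hs])
    · simp [hstall h]
    · simp [h]
  have ha : 0 < a := hb.trans_lt hba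
  have hone : 1 ≤ Λ * g * a ^ (θ - 1) := by
    calc (1 : ℝ) = a ^ (1 - θ) * a ^ (θ - 1) := by rw [← rpow_add ha]; norm_num
      _ ≤ Λ * g * a ^ (θ - 1) := by gcongr
  have hK : 0 ≤ Λ / (σ * θ) := by
    have : 0 < Λ * g := (rpow_pos_of_pos ha _).trans_le hloj
    have : 0 < Λ := pos_of_mul_pos_left this hg
    positivity
  calc s ≤ Λ * g * a ^ (θ - 1) * s := le_mul_of_one_le_left hs hone
    _ = Λ / (σ * θ) * (θ * a ^ (θ - 1) * (σ * g * s)) := by field_simp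
    _ ≤ Λ / (σ * θ) * (θ * a ^ (θ - 1) * (a - b)) := by gcongr
    _ ≤ Λ / (σ * θ) * (a ^ θ - b ^ θ) := by
      gcongr; exact mul_rpow_sub_one_mul_sub_le_rpow_sub_rpow ha hb hθ0.le hθ1

section Trapping

variable {E : Type*} [SeminormedAddCommGroup E] {x : ℕ → E} {y : E} {φ : ℕ → ℝ} {δ : ℝ}

lemma norm_sub_le_sub_of_norm_succ_sub_le {n m : ℕ} (hnm : n ≤ m)
    (h : ∀ k, n ≤ k → ‖x (k + 1) - x k‖ ≤ φ k - φ (k + 1)) : ‖x m - x n‖ ≤ φ n - φ m := by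
  induction m, hnm using Nat.le_induction with
  | base => simp
  | succ m hm ih =>
    calc ‖x (m + 1) - x n‖ ≤ ‖x (m + 1) - x m‖ + ‖x m - x n‖ :=
          norm_sub_le_norm_sub_add_norm_sub _ _ _
      _ ≤ φ n - φ (m + 1) := by linarith [h m hm]

lemma norm_sub_lt_of_norm_sub_add_lt (hφ : ∀ n, 0 ≤ φ n)
    (hstep : ∀ n, ‖x n - y‖ < δ → ‖x (n + 1) - x n‖ ≤ φ n - φ (n + 1)) {n₀ : ℕ}
    (hn₀ : ‖x n₀ - y‖ + φ n₀ < δ) {n : ℕ} (hn : n₀ ≤ n) : ‖x n - y‖ < δ := by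
  suffices ‖x n - x n₀‖ ≤ φ n₀ - φ n by
    linarith [norm_sub_le_norm_sub_add_norm_sub (x n) (x n₀) y, hφ n]
  induction n, hn using Nat.le_induction with
  | base => simp
  | succ n hn ih =>
    have hball : ‖x n - y‖ < δ := by
      linarith [norm_sub_le_norm_sub_add_norm_sub (x n) (x n₀) y, hφ n]
    calc ‖x (n + 1) - x n₀‖ ≤ ‖x (n + 1) - x n‖ + ‖x n - x n₀‖ :=
          norm_sub_le_norm_sub_add_norm_sub _ _ _
      _ ≤ φ n₀ - φ (n + 1) := by linarith [hstep n hball]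

lemma eventually_norm_sub_le_of_norm_succ_sub_le (hφ : ∀ n, 0 ≤ φ n)
    (hφ0 : Tendsto φ atTop (𝓝 0)) (hδ : 0 < δ)
    (hstep : ∀ n, ‖x n - y‖ < δ → ‖x (n + 1) - x n‖ ≤ φ n - φ (n + 1))
    (hy : MapClusterPt y atTop x) : ∀ᶠ n in atTop, ‖x n - y‖ ≤ φ n := by
  obtain ⟨n₀, hn₀⟩ : ∃ n₀, ‖x n₀ - y‖ + φ n₀ < δ := by
    have hnear : ∃ᶠ n in atTop, ‖x n - y‖ < δ / 2 :=
      (hy.frequently (Metric.ball_mem_nhds y (half_pos hδ))).mono fun n hn => by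
        rwa [dist_eq_norm] at hn
    obtain ⟨n₀, h1, h2⟩ := (hnear.and_eventually (hφ0.eventually_lt_const (half_pos hδ))).exists
    exact ⟨n₀, by linarith⟩
  filter_upwards [eventually_ge_atTop n₀] with n hn
  have htail : ∀ᶠ m in atTop, ‖x m - x n‖ ≤ φ n := by
    filter_upwards [eventually_ge_atTop n] with m hm
    have := norm_sub_le_sub_of_norm_succ_sub_le hm fun k hk =>
      hstep k (norm_sub_lt_of_norm_sub_add_lt hφ hstep hn₀ (hn.trans hk))
    linarith [hφ m]
  have : y ∈ Metric.closedBall (x n) (φ n) :=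
    Metric.isClosed_closedBall.mem_of_mapClusterPt hy (by simpa [dist_eq_norm] using htail)
  rwa [Metric.mem_closedBall, dist_eq_norm, norm_sub_rev] at this

end Trapping

section Descent

variable {E : Type*} [SeminormedAddCommGroup E] {x : ℕ → E} {y : E} {F g : ℕ → ℝ}
  {L σ κ Λ θ δ : ℝ}

lemma antitone_of_sufficient_decrease (hσ : 0 ≤ σ) (hg : ∀ i, 0 ≤ g i)
    (hA1 : ∀ i, F (i + 1) - F i ≤ -σ * g i * ‖x (i + 1) - x i‖) : Antitone F :=
  antitone_nat_of_succ_le fun i => by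
    nlinarith [hA1 i, mul_nonneg (mul_nonneg hσ (hg i)) (norm_nonneg (x (i + 1) - x i))]

lemma tendsto_zero_of_sufficient_decrease (hσ : 0 < σ) (hκ : 0 < κ) (hg : ∀ i, 0 ≤ g i)
    (hA1 : ∀ i, F (i + 1) - F i ≤ -σ * g i * ‖x (i + 1) - x i‖)
    (hA3 : ∀ᶠ i in atTop, κ * g i ≤ ‖x (i + 1) - x i‖) (hFL : Tendsto F atTop (𝓝 L)) :
    Tendsto g atTop (𝓝 0) := by
  have hdiff : Tendsto (fun i => √((F i - F (i + 1)) / (σ * κ))) atTop (𝓝 0) := by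
    simpa using ((hFL.sub (hFL.comp (tendsto_add_atTop_nat 1))).div_const (σ * κ)).sqrt
  refine squeeze_zero' (Eventually.of_forall hg) ?_ hdiff
  filter_upwards [hA3] with i hi
  refine le_sqrt_of_sq_le ?_
  rw [le_div_iff₀ (by positivity)]
  nlinarith [hA1 i, mul_le_mul_of_nonneg_left hi (mul_nonneg hσ.le (hg i))]

lemma tendsto_const_mul_rpow_sub_nhds_zero (hθ : 0 < θ) (hFL : Tendsto F atTop (𝓝 L)) (K : ℝ) :
    Tendsto (fun n => K * (F n - L) ^ θ) atTop (𝓝 0) := by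
  simpa [zero_rpow hθ.ne'] using
    ((hFL.sub_const L).rpow_const (Or.inr hθ.le)).const_mul K

lemma eventually_norm_sub_le_of_lojasiewicz (hσ : 0 < σ) (hθ0 : 0 < θ) (hθ1 : θ ≤ 1)
    (hΛ : 0 ≤ Λ) (hδ : 0 < δ) (hg : ∀ i, 0 ≤ g i)
    (hA1 : ∀ i, F (i + 1) - F i ≤ -σ * g i * ‖x (i + 1) - x i‖)
    (hA2 : ∀ i, g i = 0 → x (i + 1) = x i) (hFL : Tendsto F atTop (𝓝 L))
    (hloj : ∀ i, ‖x i - y‖ < δ → |F i - L| ^ (1 - θ) ≤ Λ * g i) (hy : MapClusterPt y atTop x) :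
    ∀ᶠ n in atTop, ‖x n - y‖ ≤ Λ / (σ * θ) * (F n - L) ^ θ := by
  have hL : ∀ i, 0 ≤ F i - L := fun i =>
    sub_nonneg.2 ((antitone_of_sufficient_decrease hσ.le hg hA1).le_of_tendsto hFL i)
  refine eventually_norm_sub_le_of_norm_succ_sub_le
    (fun n => mul_nonneg (by positivity) (rpow_nonneg (hL n) _))
    (tendsto_const_mul_rpow_sub_nhds_zero hθ0 hFL _) hδ (fun i hi => ?_) hy
  rw [← mul_sub]
  refine le_div_mul_rpow_sub_rpow_of_lojasiewicz hσ hθ0 hθ1 (hL (i + 1)) (hg i) (norm_nonneg _)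
    ?_ ?_ fun h => by rw [hA2 i h, sub_self, norm_zero]
  · linarith [hA1 i]
  · simpa [abs_of_nonneg (hL i)] using hloj i hi

lemma eventually_decay_of_lojasiewicz (hσ : 0 < σ) (hκ : 0 < κ) (hθ0 : 0 < θ) (hθ1 : θ ≤ 1)
    (hΛ : 0 < Λ) (hδ : 0 < δ) (hg : ∀ i, 0 ≤ g i)
    (hA1 : ∀ i, F (i + 1) - F i ≤ -σ * g i * ‖x (i + 1) - x i‖)
    (hA2 : ∀ i, g i = 0 → x (i + 1) = x i) (hA3 : ∀ᶠ i in atTop, κ * g i ≤ ‖x (i + 1) - x i‖)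
    (hFL : Tendsto F atTop (𝓝 L))
    (hloj : ∀ i, ‖x i - y‖ < δ → |F i - L| ^ (1 - θ) ≤ Λ * g i) (hy : MapClusterPt y atTop x) :
    ∀ᶠ n in atTop, σ * κ / Λ ^ 2 * (F n - L) ^ (2 * (1 - θ)) ≤ (F n - L) - (F (n + 1) - L) := by
  have hball : ∀ᶠ n in atTop, ‖x n - y‖ < δ := by
    filter_upwards [eventually_norm_sub_le_of_lojasiewicz hσ hθ0 hθ1 hΛ.le hδ hg hA1 hA2 hFL hloj
      hy, (tendsto_const_mul_rpow_sub_nhds_zero hθ0 hFL _).eventually_lt_const hδ] with n h1 h2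
      using h1.trans_lt h2
  filter_upwards [hball, hA3] with n hn hsafe
  have hL : 0 ≤ F n - L :=
    sub_nonneg.2 ((antitone_of_sufficient_decrease hσ.le hg hA1).le_of_tendsto hFL n)
  calc σ * κ / Λ ^ 2 * (F n - L) ^ (2 * (1 - θ))
      = σ * κ / Λ ^ 2 * ((F n - L) ^ (1 - θ)) ^ 2 := by
        rw [mul_comm 2, rpow_mul hL, rpow_two]
    _ ≤ σ * κ / Λ ^ 2 * (Λ * g n) ^ 2 := by
        gcongr
        simpa [abs_of_nonneg hL] using hloj n hn
    _ = σ * g n * (κ * g n) := by field_simp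
    _ ≤ σ * g n * ‖x (n + 1) - x n‖ := by gcongr; exact mul_nonneg hσ.le (hg n)
    _ ≤ (F n - L) - (F (n + 1) - L) := by linarith [hA1 n]

end Descent

section Rates

variable {u Δ : ℕ → ℝ}

lemma exists_pos_forall_le_mul_of_eventually_le {r : ℕ → ℝ} {C : ℝ} (hr : ∀ n, 0 < r n)
    (h : ∀ᶠ n in atTop, u n ≤ C * r n) : ∃ C', 0 < C' ∧ ∀ n, u n ≤ C' * r n := by
  obtain ⟨n₀, hn₀⟩ := eventually_atTop.1 h
  obtain ⟨B, hB⟩ := ((Set.finite_Iio n₀).image fun n => u n / r n).bddAbove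
  refine ⟨max (max C B) 1, by positivity, fun n => ?_⟩
  rcases le_or_gt n₀ n with hn | hn
  · exact (hn₀ n hn).trans <|
      mul_le_mul_of_nonneg_right ((le_max_left _ _).trans (le_max_left _ _)) (hr n).le
  · have : u n / r n ≤ B := hB ⟨n, hn, rfl⟩
    rw [div_le_iff₀ (hr n)] at this
    exact this.trans <|
      mul_le_mul_of_nonneg_right ((le_max_right _ _).trans (le_max_left _ _)) (hr n).le

lemma le_mul_exp_of_decay {c : ℝ} {n₀ : ℕ} (hΔ : ∀ n, 0 ≤ Δ n)
    (h : ∀ n ≥ n₀, c * Δ n ≤ Δ n - Δ (n + 1)) {n : ℕ} (hn : n₀ ≤ n) :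
    Δ n ≤ Δ n₀ * exp (c * n₀) * exp (-(c * n)) := by
  induction n, hn using Nat.le_induction with
  | base => rw [mul_assoc, ← exp_add]; simp
  | succ n hn ih =>
    calc Δ (n + 1) ≤ exp (-c) * Δ n := by
          nlinarith [h n hn, mul_le_mul_of_nonneg_right (add_one_le_exp (-c)) (hΔ n)]
      _ ≤ exp (-c) * (Δ n₀ * exp (c * n₀) * exp (-(c * n))) := by gcongr
      _ = Δ n₀ * exp (c * n₀) * exp (-(c * ↑(n + 1))) := by
          rw [show -(c * ↑(n + 1)) = -c + -(c * n) by push_cast; ring, exp_add]; ring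

lemma exists_forall_le_mul_exp_of_decay {K c θ : ℝ} (hK : 0 ≤ K) (hc : 0 < c) (hθ : 0 < θ)
    (hΔ : ∀ n, 0 ≤ Δ n) (hu : ∀ᶠ n in atTop, u n ≤ K * Δ n ^ θ)
    (hdecay : ∀ᶠ n in atTop, c * Δ n ≤ Δ n - Δ (n + 1)) :
    ∃ c' C, 0 < c' ∧ 0 < C ∧ ∀ n : ℕ, u n ≤ C * exp (-(c' * n)) := by
  obtain ⟨n₀, hn₀⟩ := eventually_atTop.1 hdecay
  have hA : 0 ≤ Δ n₀ * exp (c * n₀) := mul_nonneg (hΔ n₀) (exp_pos _).le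
  have hev : ∀ᶠ n : ℕ in atTop,
      u n ≤ K * (Δ n₀ * exp (c * n₀)) ^ θ * exp (-(c * θ * n)) := by
    filter_upwards [hu, eventually_ge_atTop n₀] with n hun hn
    calc u n ≤ K * Δ n ^ θ := hun
      _ ≤ K * (Δ n₀ * exp (c * n₀) * exp (-(c * n))) ^ θ := by
          gcongr
          exacts [hΔ n, le_mul_exp_of_decay hΔ hn₀ hn]
      _ = K * (Δ n₀ * exp (c * n₀)) ^ θ * exp (-(c * θ * n)) := by
          rw [mul_rpow hA (exp_pos _).le, ← exp_mul]; ring_nf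
  obtain ⟨C, hC, hle⟩ := exists_pos_forall_le_mul_of_eventually_le (fun n => exp_pos _) hev
  exact ⟨c * θ, C, by positivity, hC, hle⟩

lemma rpow_neg_add_le_of_decay {a b c γ : ℝ} (hγ : 0 ≤ γ) (ha : 0 < a) (hb : 0 < b)
    (h : c * a ^ (1 + γ) ≤ a - b) : a ^ (-γ) + γ * c ≤ b ^ (-γ) := by
  have hcancel : a ^ (-γ - 1) * a ^ (1 + γ) = 1 := by
    rw [← rpow_add ha, show -γ - 1 + (1 + γ) = 0 by ring, rpow_zero]
  calc a ^ (-γ) + γ * c = a ^ (-γ) + γ * a ^ (-γ - 1) * (c * a ^ (1 + γ)) := by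
        linear_combination -(γ * c * hcancel)
    _ ≤ a ^ (-γ) + γ * a ^ (-γ - 1) * (a - b) := by gcongr
    _ ≤ b ^ (-γ) := by linarith [mul_rpow_neg_sub_one_mul_sub_le_rpow_neg_sub_rpow_neg ha hb hγ]

lemma le_rpow_neg_of_decay {c γ : ℝ} {n₀ : ℕ} (hγ : 0 ≤ γ) (hc : 0 ≤ c) (hΔ : ∀ n, 0 ≤ Δ n)
    (h : ∀ n ≥ n₀, c * Δ n ^ (1 + γ) ≤ Δ n - Δ (n + 1)) {n : ℕ} (hn : n₀ ≤ n) (hpos : 0 < Δ n) :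
    γ * c * (n - n₀) ≤ Δ n ^ (-γ) := by
  induction n, hn using Nat.le_induction with
  | base => simpa using rpow_nonneg (hΔ n₀) _
  | succ n hn ih =>
    have hprev : 0 < Δ n := by nlinarith [h n hn, mul_nonneg hc (rpow_nonneg (hΔ n) (1 + γ))]
    have := rpow_neg_add_le_of_decay hγ hprev hpos (h n hn)
    push_cast
    linear_combination ih hprev + this

lemma exists_forall_le_mul_rpow_of_decay {K c θ γ : ℝ} (hK : 0 ≤ K) (hc : 0 < c) (hθ : 0 < θ)
    (hγ : 0 < γ) (hΔ : ∀ n, 0 ≤ Δ n) (hu : ∀ᶠ n in atTop, u n ≤ K * Δ n ^ θ)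
    (hdecay : ∀ᶠ n in atTop, c * Δ n ^ (1 + γ) ≤ Δ n - Δ (n + 1)) :
    ∃ C, 0 < C ∧ ∀ n : ℕ, 1 ≤ n → u n ≤ C * (n : ℝ) ^ (-(θ / γ)) := by
  obtain ⟨n₀, hn₀⟩ := eventually_atTop.1 hdecay
  have hβ : -(θ / γ) ≤ 0 := by have := div_pos hθ hγ; linarith
  have hev : ∀ᶠ n : ℕ in atTop,
      u n ≤ K * (γ * c / 2) ^ (-(θ / γ)) * ((n : ℝ) + 1) ^ (-(θ / γ)) := by
    filter_upwards [hu, eventually_ge_atTop (2 * n₀ + 1)] with n hun hn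
    refine hun.trans ?_
    rw [mul_assoc]
    gcongr
    rcases (hΔ n).eq_or_lt with h0 | hpos
    · rw [← h0, zero_rpow hθ.ne']; positivity
    -- `n - n₀ ≥ (n + 1) / 2` once `n > 2 n₀`
    have hlow : γ * c / 2 * (n + 1) ≤ Δ n ^ (-γ) := by
      refine le_trans ?_ (le_rpow_neg_of_decay hγ.le hc.le hΔ hn₀ (by omega) hpos)
      have : (2 * n₀ + 1 : ℝ) ≤ n := by exact_mod_cast hn
      nlinarith [mul_pos hγ hc]
    calc Δ n ^ θ = (Δ n ^ (-γ)) ^ (-(θ / γ)) := by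
          rw [← rpow_mul (hΔ n)]; congr 1; field_simp
      _ ≤ (γ * c / 2 * (n + 1)) ^ (-(θ / γ)) := rpow_le_rpow_of_nonpos (by positivity) hlow hβ
      _ = (γ * c / 2) ^ (-(θ / γ)) * ((n : ℝ) + 1) ^ (-(θ / γ)) :=
          mul_rpow (by positivity) (by positivity)
  obtain ⟨C, hC, hle⟩ :=
    exists_pos_forall_le_mul_of_eventually_le (fun n => rpow_pos_of_pos (by positivity) _) hev
  refine ⟨C, hC, fun n hn => (hle n).trans (mul_le_mul_of_nonneg_left ?_ hC.le)⟩
  exact rpow_le_rpow_of_nonpos (Nat.cast_pos.2 hn) (le_add_of_nonneg_right zero_le_one) hβ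

end Rates

theorem stmt_15_general {N : ℕ} (f : EuclideanSpace ℝ (Fin N) → ℝ)
    (hf : ContDiff ℝ 1 f)
    (M : Set (EuclideanSpace ℝ (Fin N)))
    (x : ℕ → EuclideanSpace ℝ (Fin N)) (hxM : ∀ i, x i ∈ M)
    (σ : ℝ) (hσ : 0 < σ)
    (hA1 : ∀ i, f (x (i+1)) - f (x i) ≤ -σ * gNeg f M (x i) * ‖x (i+1) - x i‖)
    (hA2 : ∀ i, gNeg f M (x i) = 0 → x (i+1) = x i)
    (κ : ℝ) (hκ : 0 < κ)
    (hA3 : ∃ n₁ : ℕ, ∀ i ≥ n₁, κ * gNeg f M (x i) ≤ ‖x (i+1) - x i‖)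
    (xstar : EuclideanSpace ℝ (Fin N))
    (hcluster : MapClusterPt xstar Filter.atTop x)
    (δ Λ θ : ℝ) (hδ : 0 < δ) (hΛ : 0 < Λ) (hθ : θ ∈ Set.Ioc (0 : ℝ) (1/2))
    (hLoj : ∀ y ∈ M, ‖y - xstar‖ < δ →
      |f y - f xstar| ^ (1 - θ) ≤ Λ * gNeg f M y) :
    Filter.Tendsto (fun i => gNeg f M (x i)) Filter.atTop (nhds 0) ∧
    (θ = 1/2 → ∃ c C : ℝ, 0 < c ∧ 0 < C ∧
      ∀ i : ℕ, ‖x i - xstar‖ ≤ C * Real.exp (-(c * i))) ∧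
    (θ < 1/2 → ∃ C : ℝ, 0 < C ∧
      ∀ i : ℕ, 1 ≤ i → ‖x i - xstar‖ ≤ C * (i : ℝ) ^ (-(θ / (1 - 2*θ)))) := by
  obtain ⟨hθ0, hθ1⟩ := hθ
  have hg : ∀ i, 0 ≤ gNeg f M (x i) := fun i => gNeg_nonneg f (hxM i)
  set F : ℕ → ℝ := fun i => f (x i)
  have hdesc : ∀ i, F (i + 1) - F i ≤ -σ * gNeg f M (x i) * ‖x (i + 1) - x i‖ := hA1
  have hA3' := eventually_atTop.2 hA3
  have hanti := antitone_of_sufficient_decrease hσ.le hg hdesc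
  have hFL : Tendsto F atTop (𝓝 (f xstar)) :=
    hanti.tendsto_atTop_of_mapClusterPt (hcluster.continuousAt_comp hf.continuous.continuousAt)
  have hΔ : ∀ i, 0 ≤ F i - f xstar := fun i => sub_nonneg.2 (hanti.le_of_tendsto hFL i)
  have hloj : ∀ i, ‖x i - xstar‖ < δ → |F i - f xstar| ^ (1 - θ) ≤ Λ * gNeg f M (x i) :=
    fun i => hLoj (x i) (hxM i)
  have hdist := eventually_norm_sub_le_of_lojasiewicz hσ hθ0 (by linarith) hΛ.le hδ hg hdesc hA2
    hFL hloj hcluster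
  have hdecay := eventually_decay_of_lojasiewicz hσ hκ hθ0 (by linarith) hΛ hδ hg hdesc hA2 hA3'
    hFL hloj hcluster
  refine ⟨tendsto_zero_of_sufficient_decrease hσ hκ hg hdesc hA3' hFL, fun hhalf => ?_, fun hlt => ?_⟩
  · subst hhalf
    norm_num only [rpow_one] at hdecay
    exact exists_forall_le_mul_exp_of_decay (by positivity) (by positivity) (by norm_num) hΔ hdist
      hdecay
  · rw [show 2 * (1 - θ) = 1 + (1 - 2 * θ) by ring] at hdecay
    exact exists_forall_le_mul_rpow_of_decay (by positivity) (by positivity) hθ0 (by linarith) hΔ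
      hdist hdecay

/-- Under (A1), (A2), the Łojasiewicz inequality at the cluster point `x*`
and additionally the small step-size safeguard (A3) for large `n`, one has
`g⁻(x_n) → 0` and the convergence rate `‖x_n − x*‖ ≤ C e^{−cn}` if `θ = 1/2`,
resp. `‖x_n − x*‖ ≤ C n^{−θ/(1−2θ)}` if `0 < θ < 1/2`. -/
theorem stmt_15 {N : ℕ} (f : EuclideanSpace ℝ (Fin N) → ℝ)
    (hf : ContDiff ℝ 1 f) (hbdd : ∃ b : ℝ, ∀ y, b ≤ f y)
    (M : Set (EuclideanSpace ℝ (Fin N))) (hM : IsClosed M)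
    (x : ℕ → EuclideanSpace ℝ (Fin N)) (hxM : ∀ i, x i ∈ M)
    (σ : ℝ) (hσ : 0 < σ)
    (hA1 : ∀ i, f (x (i+1)) - f (x i) ≤ -σ * gNeg f M (x i) * ‖x (i+1) - x i‖)
    (hA2 : ∀ i, gNeg f M (x i) = 0 → x (i+1) = x i)
    (κ : ℝ) (hκ : 0 < κ)
    (hA3 : ∃ n₁ : ℕ, ∀ i ≥ n₁, κ * gNeg f M (x i) ≤ ‖x (i+1) - x i‖)
    (xstar : EuclideanSpace ℝ (Fin N))
    (hcluster : MapClusterPt xstar Filter.atTop x)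
    (δ Λ θ : ℝ) (hδ : 0 < δ) (hΛ : 0 < Λ) (hθ : θ ∈ Set.Ioc (0 : ℝ) (1/2))
    (hLoj : ∀ y ∈ M, ‖y - xstar‖ < δ →
      |f y - f xstar| ^ (1 - θ) ≤ Λ * gNeg f M y) :
    Filter.Tendsto (fun i => gNeg f M (x i)) Filter.atTop (nhds 0) ∧
    (θ = 1/2 → ∃ c C : ℝ, 0 < c ∧ 0 < C ∧
      ∀ i : ℕ, ‖x i - xstar‖ ≤ C * Real.exp (-(c * i))) ∧
    (θ < 1/2 → ∃ C : ℝ, 0 < C ∧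
      ∀ i : ℕ, 1 ≤ i → ‖x i - xstar‖ ≤ C * (i : ℝ) ^ (-(θ / (1 - 2*θ)))) :=
  stmt_15_general f hf M x hxM σ hσ hA1 hA2 κ hκ hA3 xstar hcluster δ Λ θ hδ hΛ hθ hLoj
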